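/- arXiv:1104.2882 — 2 statements merged into one kernel-verified Lean document; each statement's English description precedes it below -/
import Mathlib

section
/- Let G be a weighted undirected graph with positive edge weights, let C be a minimum-weight simple cycle in G, and let s, v_i, v_{i+1} ∈ C with (v_i, v_{i+1}) a critical edge for s (i.e., d_C[s, v_i] ≤ ⌊w(C)/2⌋ and d_C[v_{i+1}, s] ≤ ⌊w(C)/2⌋). Then the portion of C from s to v_i is a shortest path in G, i.e., d[s, v_i] = d_C[s, v_i], and similarly d[v_{i+1}, s] = d_C[v_{i+1}, s]. -/
/-!
If the arc of `C` from `s` to `v_i` had a shortcut `P` in `G`, then `P` (made simple) and the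
complementary arc `Q` of `C` would be two different simple paths between the same endpoints: their
union contains a simple cycle of weight at most `w(P) + w(Q) < w(C)`, contradicting minimality.
The hypothesis that the arc has weight at most `w(C)/2` is what makes `P` different from `Q`
(it is strictly lighter than `Q`).
-/

/-- `p` is a walk in the graph with edge relation `E`. -/
def IsWalk {V : Type*} (E : V → V → Prop) : List V → Prop
  | [] => True
  | [_] => True
  | a :: b :: l => E a b ∧ IsWalk E (b :: l)

/-- `p` is a walk from `u` to `x`. -/
def IsWalkFrom {V : Type*} (E : V → V → Prop) (p : List V) (u x : V) : Prop :=
  IsWalk E p ∧ p.head? = some u ∧ p.getLast? = some x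

/-- Total weight of a walk given as a list of vertices. -/
def wWeight {V α : Type*} [AddCommMonoid α] (w : V → V → α) : List V → α
  | a :: b :: l => w a b + wWeight w (b :: l)
  | _ => 0

/-- Weight of the arc of a cycle (an `ℓ`-periodic vertex sequence) from position `a`
traversing `k` edges. -/
def arcW {V α : Type*} [AddCommMonoid α] (w : V → V → α) (c : ℕ → V) (a k : ℕ) : α :=
  ∑ j ∈ Finset.range k, w (c (a + j)) (c (a + j + 1))

open Finset Function

section Walks

variable {V : Type*} {E : V → V → Prop}

theorem isWalk_iff_isChain : ∀ {l : List V}, IsWalk E l ↔ l.IsChain E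
  | [] | [_] => by simp [IsWalk]
  | _ :: _ :: _ => by rw [IsWalk, List.isChain_cons_cons, isWalk_iff_isChain]

theorem isWalkFrom_append_cons_iff {l₁ l₂ : List V} {x y z : V} :
    IsWalkFrom E (l₁ ++ z :: l₂) x y ↔
      IsWalkFrom E (l₁ ++ [z]) x z ∧ IsWalkFrom E (z :: l₂) z y := by
  have hhead : (l₁ ++ z :: l₂).head? = (l₁ ++ [z]).head? := by cases l₁ <;> rfl
  simp only [IsWalkFrom, isWalk_iff_isChain, List.isChain_split (l₁ := l₁) (l₂ := l₂), hhead,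
    List.getLast?_append_cons l₁, List.head?_cons]
  tauto

theorem IsWalkFrom.concat {l : List V} {x y z : V} (h : IsWalkFrom E l x y) (hyz : E y z) :
    IsWalkFrom E (l ++ [z]) x z := by
  obtain ⟨hw, hx, hy⟩ := h
  refine ⟨?_, ?_, List.getLast?_concat⟩
  · rw [isWalk_iff_isChain] at hw ⊢
    exact hw.append (List.isChain_singleton z) (by simp [hy, hyz])
  · rw [List.head?_append, hx]
    rfl

theorem isWalkFrom_cons_cons_iff {l : List V} {a b x y : V} :
    IsWalkFrom E (a :: b :: l) x y ↔ a = x ∧ E a b ∧ IsWalkFrom E (b :: l) b y := by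
  simp only [IsWalkFrom, IsWalk, List.head?_cons, List.getLast?_cons_cons, Option.some.injEq]
  tauto

theorem IsWalkFrom.eq_singleton {l : List V} {x : V} (h : IsWalkFrom E l x x) (hl : l.Nodup) :
    l = [x] := by
  obtain ⟨-, hx, hlast⟩ := h
  obtain ⟨t, rfl⟩ : ∃ t, l = x :: t := by
    cases l with
    | nil => simp at hx
    | cons a t => exact ⟨t, by simp at hx; rw [hx]⟩
  cases t with
  | nil => rfl
  | cons b t =>
    rw [List.getLast?_cons_cons] at hlast
    exact absurd (List.mem_of_getLast? hlast) (List.nodup_cons.1 hl).1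

end Walks

section Weights

variable {V α : Type*} [AddCommMonoid α] {w : V → V → α}

theorem wWeight_cons_cons (a b : V) (l : List V) :
    wWeight w (a :: b :: l) = w a b + wWeight w (b :: l) := rfl

theorem wWeight_append_cons : ∀ (l₁ : List V) (z : V) (l₂ : List V),
    wWeight w (l₁ ++ z :: l₂) = wWeight w (l₁ ++ [z]) + wWeight w (z :: l₂)
  | [], _, _ => by simp [wWeight]
  | [_], _, _ => by simp [wWeight]
  | a :: b :: l₁, z, l₂ => by
    show w a b + wWeight w ((b :: l₁) ++ z :: l₂) = w a b + wWeight w ((b :: l₁) ++ [z]) + _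
    rw [wWeight_append_cons (b :: l₁), add_assoc]

theorem wWeight_concat {l : List V} {y : V} (z : V) (hy : l.getLast? = some y) :
    wWeight w (l ++ [z]) = wWeight w l + w y z := by
  obtain ⟨l, rfl⟩ := List.getLast?_eq_some_iff.1 hy
  rw [List.append_assoc, List.singleton_append, wWeight_append_cons]
  simp [wWeight]

theorem wWeight_reverse (hw : ∀ a b, w a b = w b a) :
    ∀ l : List V, wWeight w l.reverse = wWeight w l
  | [] | [_] => rfl
  | a :: b :: l => by
    rw [List.reverse_cons, wWeight_concat (y := b) a (by simp), wWeight_reverse hw (b :: l),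
      wWeight_cons_cons, hw, add_comm]

theorem wWeight_map_range (g : ℕ → V) :
    ∀ n, wWeight w ((List.range (n + 1)).map g) = ∑ j ∈ range n, w (g j) (g (j + 1))
  | 0 => rfl
  | n + 1 => by
    rw [List.range_succ, List.map_append, List.map_singleton,
      wWeight_concat (y := g n) _ (by simp [List.range_succ]), wWeight_map_range g n,
      sum_range_succ]

theorem arcW_add (f : ℕ → V) (a m n : ℕ) :
    arcW w f a (m + n) = arcW w f a m + arcW w f (a + m) n := by
  simp only [arcW, sum_range_add, add_assoc]

end Weights

theorem arcW_period {V α : Type*} [AddCancelCommMonoid α] {w : V → V → α} {f : ℕ → V} {ℓ : ℕ}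
    (hf : Periodic f ℓ) (a : ℕ) : arcW w f a ℓ = arcW w f 0 ℓ := by
  induction a with
  | zero => rfl
  | succ a ih =>
    have hlast : arcW w f (a + ℓ) 1 = arcW w f a 1 := by
      simp [arcW, hf a, show a + ℓ + 1 = a + 1 + ℓ by omega, hf (a + 1)]
    have h := arcW_add (w := w) f a 1 ℓ
    rw [add_comm 1, arcW_add, hlast, add_comm] at h
    exact (add_left_cancel h).symm.trans ih

section NonnegWeights

variable {V : Type*} {E : V → V → Prop} {w : V → V → ℝ}

theorem wWeight_nonneg (hw : ∀ a b, E a b → 0 < w a b) :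
    ∀ {l : List V}, IsWalk E l → 0 ≤ wWeight w l
  | [], _ | [_], _ => le_rfl
  | a :: b :: l, h => by
    rw [wWeight_cons_cons]
    exact add_nonneg (hw a b h.1).le (wWeight_nonneg hw h.2)

theorem List.exists_eq_append_cons_append_cons_of_not_nodup :
    ∀ {l : List V}, ¬ l.Nodup → ∃ a l₁ l₂ l₃, l = l₁ ++ a :: (l₂ ++ a :: l₃)
  | [], h => absurd List.nodup_nil h
  | x :: t, h => by
    by_cases hx : x ∈ t
    · obtain ⟨l₂, l₃, rfl⟩ := List.append_of_mem hx
      exact ⟨x, [], l₂, l₃, rfl⟩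
    · obtain ⟨a, l₁, l₂, l₃, rfl⟩ :=
        exists_eq_append_cons_append_cons_of_not_nodup fun ht => h (List.nodup_cons.2 ⟨hx, ht⟩)
      exact ⟨a, x :: l₁, l₂, l₃, rfl⟩

/-- Cutting out the closed subwalk between two visits of a vertex. -/
theorem IsWalkFrom.exists_nodup (hw : ∀ a b, E a b → 0 < w a b) {p : List V} {x y : V}
    (hp : IsWalkFrom E p x y) :
    ∃ q, IsWalkFrom E q x y ∧ q.Nodup ∧ wWeight w q ≤ wWeight w p := by
  induction hn : p.length using Nat.strong_induction_on generalizing p with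
  | _ n ih =>
  by_cases hnd : p.Nodup
  · exact ⟨p, hp, hnd, le_rfl⟩
  obtain ⟨a, l₁, l₂, l₃, rfl⟩ := List.exists_eq_append_cons_append_cons_of_not_nodup hnd
  obtain ⟨hp₁, hp₂⟩ := isWalkFrom_append_cons_iff.1 hp
  obtain ⟨hloop, hp₃⟩ :=
    isWalkFrom_append_cons_iff.1 (show IsWalkFrom E ((a :: l₂) ++ a :: l₃) a y from hp₂)
  obtain ⟨q, hq, hqnd, hqw⟩ :=
    ih _ (by simp [← hn]) (isWalkFrom_append_cons_iff.2 ⟨hp₁, hp₃⟩) rfl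
  refine ⟨q, hq, hqnd, hqw.trans ?_⟩
  have hsplit := wWeight_append_cons (w := w) l₁ a (l₂ ++ a :: l₃)
  have hsplit' := wWeight_append_cons (w := w) (a :: l₂) a l₃
  have hshort := wWeight_append_cons (w := w) l₁ a l₃
  have := wWeight_nonneg hw hloop.1
  simp only [List.cons_append] at hsplit' this
  linarith

end NonnegWeights

section Arcs

variable {V : Type*} {E : V → V → Prop}

def arcList (f : ℕ → V) (a k : ℕ) : List V := (List.range (k + 1)).map fun j => f (a + j)

theorem isWalk_arcList_iff {f : ℕ → V} {a k : ℕ} :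
    IsWalk E (arcList f a k) ↔ ∀ j < k, E (f (a + j)) (f (a + j + 1)) := by
  rw [isWalk_iff_isChain, arcList, List.isChain_map, List.isChain_range_succ]
  rfl

theorem isWalkFrom_arcList {f : ℕ → V} (hf : ∀ j, E (f j) (f (j + 1))) (a k : ℕ) :
    IsWalkFrom E (arcList f a k) (f a) (f (a + k)) :=
  ⟨isWalk_arcList_iff.2 fun j _ => hf (a + j), by simp [arcList, List.range_succ_eq_map],
    by simp [arcList, List.range_succ]⟩

theorem wWeight_arcList {α : Type*} [AddCommMonoid α] (w : V → V → α) (f : ℕ → V) (a k : ℕ) :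
    wWeight w (arcList f a k) = arcW w f a k :=
  wWeight_map_range _ k

theorem nodup_arcList {f : ℕ → V} {ℓ : ℕ} (hf : Periodic f ℓ)
    (hinj : ∀ i j, i < ℓ → j < ℓ → f i = f j → i = j) (a : ℕ) {k : ℕ} (hk : k < ℓ) :
    (arcList f a k).Nodup := by
  refine (List.nodup_map_iff_inj_on List.nodup_range).2 fun i hi j hj hij => ?_
  simp only [List.mem_range] at hi hj
  have hmod : (a + i) % ℓ = (a + j) % ℓ :=
    hinj _ _ (Nat.mod_lt _ (by omega)) (Nat.mod_lt _ (by omega))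
      (by rwa [hf.map_mod_nat, hf.map_mod_nat])
  rcases le_total i j with h | h
  · have := Nat.eq_zero_of_dvd_of_lt ((Nat.modEq_iff_dvd' (by omega)).1 hmod) (by omega)
    omega
  · have := Nat.eq_zero_of_dvd_of_lt ((Nat.modEq_iff_dvd' (by omega)).1 hmod.symm) (by omega)
    omega

end Arcs

section Cycles

variable {V : Type*} {E : V → V → Prop}

def IsSimpleCycle (E : V → V → Prop) (c : List V) : Prop :=
  3 ≤ c.length ∧ c.Nodup ∧ IsWalk E (c ++ c.take 1)

theorem IsSimpleCycle.exists_periodic {α : Type*} [AddCommMonoid α] (w : V → V → α)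
    {l : List V} (hc : IsSimpleCycle E l) :
    ∃ u : ℕ → V, Periodic u l.length ∧ (∀ j, E (u j) (u (j + 1))) ∧
      (∀ i j, i < l.length → j < l.length → u i = u j → i = j) ∧
      arcW w u 0 l.length = wWeight w (l ++ l.take 1) := by
  obtain ⟨hlen, hnd, hwalk⟩ := hc
  set m := l.length
  have hm : 0 < m := by omega
  let u : ℕ → V := fun j => l[j % m]'(Nat.mod_lt _ hm)
  have hper : Periodic u m := fun j => by simp [u]
  have hu : ∀ j (hj : j < m), u j = l[j] := fun j hj => by simp [u, Nat.mod_eq_of_lt hj]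
  have hclosed : l ++ l.take 1 = arcList u 0 m := by
    refine List.ext_getElem (by simp [arcList]; omega) fun i h₁ h₂ => ?_
    simp only [arcList, List.getElem_map, List.getElem_range, zero_add]
    rcases Nat.lt_or_ge i m with hi | hi
    · rw [List.getElem_append_left hi, hu i hi]
    · obtain rfl : i = m := by simp [arcList] at h₂; omega
      rw [List.getElem_append_right le_rfl]
      simp [u, m]
  rw [hclosed, isWalk_arcList_iff] at hwalk
  refine ⟨u, hper, fun j => ?_, fun i j hi hj hij => ?_, by rw [hclosed, wWeight_arcList]⟩
  · have := hwalk (j % m) (Nat.mod_lt _ hm)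
    rwa [zero_add, ← hper.map_mod_nat (j % m + 1), Nat.mod_add_mod, hper.map_mod_nat,
      hper.map_mod_nat] at this
  · rwa [hu i hi, hu j hj, hnd.getElem_inj_iff] at hij

end Cycles

section ShortestArcs

variable {V : Type*} {E : V → V → Prop} {w : V → V → ℝ}

theorem IsWalkFrom.isSimpleCycle_cons {l : List V} {q y : V} (h : IsWalkFrom E (q :: l) q y)
    (hnd : (q :: l).Nodup) (hl : 2 ≤ l.length) (hyq : E y q) : IsSimpleCycle E (q :: l) :=
  ⟨by simp; omega, hnd, (h.concat hyq).1⟩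

/-- Walk along `Q` until it first leaves `P`: the edge `y → q` either closes a cycle with the
tail of `P` from `q`, or backtracks the last edge of `P` and can be cut off together with it. -/
theorem exists_isSimpleCycle_of_ne_reverse (hw : ∀ a b, E a b → 0 < w a b) {x : V} :
    ∀ {Q P : List V} {y : V}, IsWalkFrom E P x y → P.Nodup → IsWalkFrom E Q y x → Q.Nodup →
      P ≠ Q.reverse →
      ∃ c, IsSimpleCycle E c ∧ wWeight w (c ++ c.take 1) ≤ wWeight w P + wWeight w Q
  | [], _, _, _, _, hQ, _, _ => by simp [IsWalkFrom] at hQ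
  | [_], P, _, hP, hPnd, hQ, _, hne => by
    obtain ⟨-, hy, hx⟩ := hQ
    simp only [List.head?_cons, List.getLast?_singleton, Option.some.injEq] at hy hx
    subst hy hx
    exact absurd (hP.eq_singleton hPnd) hne
  | y :: q :: Q', P, _, hP, hPnd, hQ, hQnd, hne => by
    obtain ⟨hy, hyq, hQ'⟩ := isWalkFrom_cons_cons_iff.1 hQ
    subst hy
    obtain ⟨hyQ', hQ'nd⟩ := List.nodup_cons.1 hQnd
    have hwyq := hw _ _ hyq
    have hQ'nn := wWeight_nonneg hw hQ'.1
    rw [wWeight_cons_cons]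
    by_cases hq : q ∈ P
    · obtain ⟨P₁, P₂, rfl⟩ := List.append_of_mem hq
      obtain ⟨hP₁, hP₂⟩ := isWalkFrom_append_cons_iff.1 hP
      have hP₁nn := wWeight_nonneg hw hP₁.1
      rw [wWeight_append_cons]
      rcases P₂ with _ | ⟨b, _ | ⟨b', P₂⟩⟩
      · obtain rfl : q = y := by simpa using hP₂.2.2
        exact absurd List.mem_cons_self hyQ'
      · obtain ⟨-, hqy, -⟩ := isWalkFrom_cons_cons_iff.1 hP₂
        obtain rfl : b = y := by simpa using hP₂.2.2
        have hne' : P₁ ++ [q] ≠ (q :: Q').reverse := by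
          rintro h
          rw [List.reverse_cons, List.append_cancel_right_eq] at h
          simp [h] at hne
        obtain ⟨c, hc, hcw⟩ := exists_isSimpleCycle_of_ne_reverse hw hP₁
          (hPnd.sublist (by simp)) hQ' hQ'nd hne'
        have := hw _ _ hqy
        exact ⟨c, hc, by simp only [wWeight] at hcw ⊢; linarith⟩
      · refine ⟨_, hP₂.isSimpleCycle_cons (hPnd.sublist (List.sublist_append_right _ _))
          (by simp) hyq, ?_⟩
        rw [show List.take 1 (q :: b :: b' :: P₂) = [q] from rfl, wWeight_concat q hP₂.2.2]
        linarith
    · have hne' : P ++ [q] ≠ (q :: Q').reverse := by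
        rintro h
        rw [List.reverse_cons, List.append_cancel_right_eq] at h
        exact hyQ' (List.mem_cons_of_mem _
          (List.mem_reverse.1 (h ▸ List.mem_of_getLast? hP.2.2)))
      obtain ⟨c, hc, hcw⟩ := exists_isSimpleCycle_of_ne_reverse hw (hP.concat hyq)
        (by simpa using hPnd.concat hq) hQ' hQ'nd hne'
      rw [wWeight_concat q hP.2.2] at hcw
      exact ⟨c, hc, by linarith⟩

theorem dist_eq_arcW_of_le_half {d : V → V → ℝ} (hwsym : ∀ a b, w a b = w b a)
    (hw : ∀ a b, E a b → 0 < w a b) (hdle : ∀ u x p, IsWalkFrom E p u x → d u x ≤ wWeight w p)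
    (hdach : ∀ u x, (∃ p, IsWalkFrom E p u x) → ∃ p, IsWalkFrom E p u x ∧ wWeight w p = d u x)
    {ℓ : ℕ} {v : ℕ → V} (hper : Periodic v ℓ) (hedge : ∀ j, E (v j) (v (j + 1)))
    (hinj : ∀ i j, i < ℓ → j < ℓ → v i = v j → i = j)
    (hcyc : ∀ c, IsSimpleCycle E c → arcW w v 0 ℓ ≤ wWeight w (c ++ c.take 1))
    {a k : ℕ} (hk : k ≤ ℓ) (hhalf : arcW w v a k ≤ arcW w v 0 ℓ / 2) :
    d (v a) (v (a + k)) = arcW w v a k := by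
  have harc := isWalkFrom_arcList hedge a k
  refine le_antisymm (wWeight_arcList w v a k ▸ hdle _ _ _ harc) (not_lt.1 fun hlt => ?_)
  obtain ⟨p, hp, hpd⟩ := hdach _ _ ⟨_, harc⟩
  obtain ⟨P, hP, hPnd, hPp⟩ := hp.exists_nodup (w := w) hw
  have hPlt : wWeight w P < arcW w v a k := by linarith
  have hk0 : k ≠ 0 := by
    rintro rfl
    exact (wWeight_nonneg hw hP.1).not_gt (by simpa [arcW] using hPlt)
  set Q := arcList v (a + k) (ℓ - k)
  have hQ : IsWalkFrom E Q (v (a + k)) (v a) := by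
    simpa [show a + k + (ℓ - k) = a + ℓ by omega, hper a] using
      isWalkFrom_arcList hedge (a + k) (ℓ - k)
  have hQw : arcW w v a k + wWeight w Q = arcW w v 0 ℓ := by
    rw [wWeight_arcList, ← arcW_add, Nat.add_sub_cancel' hk, arcW_period hper]
  have hne : P ≠ Q.reverse := by
    rintro rfl
    rw [wWeight_reverse hwsym] at hPlt
    linarith
  obtain ⟨c, hc, hcw⟩ := exists_isSimpleCycle_of_ne_reverse hw hP hPnd hQ
    (nodup_arcList hper hinj _ (by omega)) hne
  linarith [hcyc c hc]

end ShortestArcs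

/-- The minimum cycle `C` is the `ℓ`-periodic sequence `v`, `s = v a`, and the critical edge is
`(v (a + k), v (a + k + 1))`. -/
theorem stmt2_general {V : Type*} (E : V → V → Prop) (w : V → V → ℝ) (d : V → V → ℝ)
    (hwsym : ∀ a b, w a b = w b a)
    (hwpos : ∀ a b, E a b → 0 < w a b)
    (hdle : ∀ u x p, IsWalkFrom E p u x → d u x ≤ wWeight w p)
    (hdach : ∀ u x, (∃ p, IsWalkFrom E p u x) →
      ∃ p, IsWalkFrom E p u x ∧ wWeight w p = d u x)
    (ℓ : ℕ) (v : ℕ → V)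
    (hper : ∀ j, v (j + ℓ) = v j)
    (hedge : ∀ j, E (v j) (v (j + 1)))
    (hinj : ∀ i j, i < ℓ → j < ℓ → v i = v j → i = j)
    (hmin : ∀ (m : ℕ) (u : ℕ → V), 3 ≤ m → (∀ j, u (j + m) = u j) →
      (∀ j, E (u j) (u (j + 1))) → (∀ i j, i < m → j < m → u i = u j → i = j) →
      arcW w v 0 ℓ ≤ arcW w u 0 m)
    (a k : ℕ) (hk : k < ℓ)
    (h1 : arcW w v a k ≤ arcW w v 0 ℓ / 2)
    (h2 : arcW w v (a + k + 1) (ℓ - (k + 1)) ≤ arcW w v 0 ℓ / 2) :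
    d (v a) (v (a + k)) = arcW w v a k ∧
    d (v (a + k + 1)) (v a) = arcW w v (a + k + 1) (ℓ - (k + 1)) := by
  have hcyc : ∀ c, IsSimpleCycle E c → arcW w v 0 ℓ ≤ wWeight w (c ++ c.take 1) := by
    intro c hc
    obtain ⟨u, hu_per, hu_edge, hu_inj, hu_weight⟩ := hc.exists_periodic w
    exact hu_weight ▸ hmin _ u hc.1 hu_per hu_edge hu_inj
  refine ⟨dist_eq_arcW_of_le_half hwsym hwpos hdle hdach hper hedge hinj hcyc hk.le h1, ?_⟩
  have h := dist_eq_arcW_of_le_half hwsym hwpos hdle hdach hper hedge hinj hcyc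
    (Nat.sub_le ℓ (k + 1)) h2
  rwa [show a + k + 1 + (ℓ - (k + 1)) = a + ℓ by omega, hper] at h

/-- in an undirected graph with positive real edge weights, if `C`
(encoded by the `ℓ`-periodic sequence `v`, injective on one period) is a minimum-weight
simple cycle, `s = v a` and `(v (a+k), v (a+k+1))` is a critical edge for `s`
(both cycle-arcs to/from the critical edge have weight at most `w(C)/2`), then the two
cycle portions are shortest paths: `d[s, v_{a+k}] = d_C[s, v_{a+k}]` and
`d[v_{a+k+1}, s] = d_C[v_{a+k+1}, s]`.  Here `d` is the shortest-path distance,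
characterized by being a lower bound on the weight of every walk and attained by some
walk whenever the two vertices are connected. -/
theorem stmt2 {V : Type*} (E : V → V → Prop) (w : V → V → ℝ) (d : V → V → ℝ)
    (hEsym : ∀ a b, E a b → E b a) (hwsym : ∀ a b, w a b = w b a)
    (hwpos : ∀ a b, E a b → 0 < w a b)
    (hdle : ∀ u x p, IsWalkFrom E p u x → d u x ≤ wWeight w p)
    (hdach : ∀ u x, (∃ p, IsWalkFrom E p u x) →
      ∃ p, IsWalkFrom E p u x ∧ wWeight w p = d u x)
    (ℓ : ℕ) (v : ℕ → V) (hℓ : 3 ≤ ℓ)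
    (hper : ∀ j, v (j + ℓ) = v j)
    (hedge : ∀ j, E (v j) (v (j + 1)))
    (hinj : ∀ i j, i < ℓ → j < ℓ → v i = v j → i = j)
    (hmin : ∀ (m : ℕ) (u : ℕ → V), 3 ≤ m → (∀ j, u (j + m) = u j) →
      (∀ j, E (u j) (u (j + 1))) → (∀ i j, i < m → j < m → u i = u j → i = j) →
      arcW w v 0 ℓ ≤ arcW w u 0 m)
    (a k : ℕ) (hk : k < ℓ)
    (h1 : arcW w v a k ≤ arcW w v 0 ℓ / 2)
    (h2 : arcW w v (a + k + 1) (ℓ - (k + 1)) ≤ arcW w v 0 ℓ / 2) :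
    d (v a) (v (a + k)) = arcW w v a k ∧
    d (v (a + k + 1)) (v a) = arcW w v (a + k + 1) (ℓ - (k + 1)) :=
  stmt2_general E w d hwsym hwpos hdle hdach ℓ v hper hedge hinj hmin a k hk h1 h2
end

section
/- In a directed graph where C is a minimum-weight simple cycle, for every two vertices u, v on C the path along C from u to v is a shortest path in G: d_C[u, v] = d[u, v]. -/
/- helpers -/
lemma succ_mod' (t m : ℕ) : (t+1) % m = (t % m + 1) % m := by
  conv_lhs => rw [Nat.add_mod]
  conv_rhs => rw [Nat.add_mod]
  rw [Nat.mod_mod_of_dvd _ dvd_rfl]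

lemma arcW_add_s3 {V : Type*} (w : V → V → ℝ) (c : ℕ → V) (a k₁ k₂ : ℕ) :
    arcW w c a (k₁ + k₂) = arcW w c a k₁ + arcW w c (a + k₁) k₂ := by
  unfold arcW
  rw [Finset.sum_range_add]
  congr 1
  apply Finset.sum_congr rfl
  intro j _
  have h1 : a + (k₁ + j) = a + k₁ + j := by omega
  rw [h1]

lemma arcW_succ_left {V : Type*} (w : V → V → ℝ) (c : ℕ → V) (a k : ℕ) :
    arcW w c a (k+1) = w (c a) (c (a+1)) + arcW w c (a+1) k := by
  have h := arcW_add_s3 w c a 1 k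
  have h1 : arcW w c a 1 = w (c a) (c (a+1)) := by
    unfold arcW; simp
  rw [show k + 1 = 1 + k from by omega, h, h1]

lemma arcW_one {V : Type*} (w : V → V → ℝ) (c : ℕ → V) (a : ℕ) :
    arcW w c a 1 = w (c a) (c (a+1)) := by unfold arcW; simp

lemma arcW_period_s3 {V : Type*} (w : V → V → ℝ) (c : ℕ → V) (L : ℕ)
    (hper : ∀ j, c (j + L) = c j) : ∀ a, arcW w c a L = arcW w c 0 L := by
  intro a
  induction a with
  | zero => rfl
  | succ a ih =>
    have h1 : arcW w c a (1 + L) = arcW w c a 1 + arcW w c (a+1) L := arcW_add_s3 w c a 1 L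
    have h2 : arcW w c a (L + 1) = arcW w c a L + arcW w c (a+L) 1 := arcW_add_s3 w c a L 1
    have h3 : arcW w c (a+L) 1 = arcW w c a 1 := by
      rw [arcW_one, arcW_one, hper a, show a + L + 1 = (a+1) + L from by omega, hper (a+1)]
    have h4 : (1 : ℕ) + L = L + 1 := by omega
    rw [h4] at h1
    rw [h1, h3] at h2
    have : arcW w c (a+1) L = arcW w c a L := by linarith
    rw [this, ih]

/-- key lemma: any closed walk has weight at least the minimum cycle weight -/
lemma closedWalkGe {V : Type*} (E : V → V → Prop) (w : V → V → ℝ)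
    (ℓ : ℕ) (v : ℕ → V) (hwC : 0 ≤ arcW w v 0 ℓ)
    (hmin : ∀ (m : ℕ) (u : ℕ → V), 1 ≤ m → (∀ j, u (j + m) = u j) →
      (∀ j, E (u j) (u (j + 1))) → (∀ i j, i < m → j < m → u i = u j → i = j) →
      arcW w v 0 ℓ ≤ arcW w u 0 m) :
    ∀ (m : ℕ) (q : ℕ → V), 1 ≤ m → (∀ j, q (j + m) = q j) →
      (∀ j, E (q j) (q (j + 1))) → arcW w v 0 ℓ ≤ arcW w q 0 m := by
  intro m
  induction m using Nat.strong_induction_on with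
  | _ m IH =>
  intro q hm hqper hqe
  by_cases hinj : ∀ i j, i < m → j < m → q i = q j → i = j
  · exact hmin m q hm hqper hqe hinj
  · push_neg at hinj
    obtain ⟨i₀, j₀, hi₀, hj₀, hqij₀, hne₀⟩ := hinj
    -- wlog i < j
    obtain ⟨i, j, hij, hjm, hqij⟩ : ∃ i j, i < j ∧ j < m ∧ q i = q j := by
      rcases Nat.lt_or_ge i₀ j₀ with h | h
      · exact ⟨i₀, j₀, h, hj₀, hqij₀⟩
      · exact ⟨j₀, i₀, lt_of_le_of_ne h (Ne.symm hne₀), hi₀, hqij₀.symm⟩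
    set p := j - i with hp
    set m' := m - p with hm'
    have hp1 : 1 ≤ p := by omega
    have hpm : p < m := by omega
    have hm'1 : 1 ≤ m' := by omega
    have hm'm : m' < m := by omega
    have hj : j = i + p := by omega
    have him' : i < m' := by omega
    have hqm : q m = q 0 := by have := hqper 0; simpa using this
    have hpos : 0 < p := hp1
    have hmpos : 0 < m' := hm'1
    -- small cycle r
    set r : ℕ → V := fun t => q (i + t % p) with hr
    have hr_succ : ∀ t, r (t + 1) = q (i + t % p + 1) := by
      intro t
      have hlt : t % p < p := Nat.mod_lt t hpos
      rcases Nat.lt_or_ge (t % p + 1) p with h | h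
      · have : (t+1) % p = t % p + 1 := by
          rw [succ_mod', Nat.mod_eq_of_lt h]
        simp only [hr, this]
        ring_nf
      · have hep : t % p + 1 = p := by omega
        have : (t+1) % p = 0 := by
          rw [succ_mod', hep, Nat.mod_self]
        simp only [hr, this]
        rw [Nat.add_zero, hqij, hj, show i + p = i + t % p + 1 from by omega]
    have hr_per : ∀ t, r (t + p) = r t := by
      intro t; simp only [hr, Nat.add_mod_right]
    have hr_e : ∀ t, E (r t) (r (t + 1)) := by
      intro t; rw [hr_succ]; exact hqe (i + t % p)
    have hr_ge : arcW w v 0 ℓ ≤ arcW w r 0 p := IH p hpm r hp1 hr_per hr_e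
    have hr_val : arcW w r 0 p = arcW w q i p := by
      unfold arcW
      apply Finset.sum_congr rfl
      intro t ht
      rw [Finset.mem_range] at ht
      have h1 : r (0 + t) = q (i + t) := by
        simp only [hr, Nat.zero_add, Nat.mod_eq_of_lt ht]
      have h2 : r (0 + t + 1) = q (i + t + 1) := by
        rw [Nat.zero_add, hr_succ, Nat.mod_eq_of_lt ht]
      rw [h1, h2]
    -- remaining closed walk s
    set σ : ℕ → ℕ := fun t => if t < i then t else t + p with hσ
    set s : ℕ → V := fun t => q (σ (t % m')) with hs
    have hσi : ∀ t, t < i → σ t = t := by intro t ht; simp [hσ, ht]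
    have hσg : ∀ t, i ≤ t → σ t = t + p := by
      intro t ht; simp [hσ, Nat.not_lt.mpr ht]
    have hs_succ : ∀ t, s (t + 1) = q (σ (t % m') + 1) := by
      intro t
      have hlt : t % m' < m' := Nat.mod_lt t hmpos
      rcases Nat.lt_or_ge (t % m' + 1) m' with h | h
      · have hmod : (t+1) % m' = t % m' + 1 := by
          rw [succ_mod', Nat.mod_eq_of_lt h]
        simp only [hs, hmod]
        -- compare σ (t'+1) with σ t' + 1 as q-values
        set t' := t % m'
        rcases Nat.lt_or_ge (t' + 1) i with h1 | h1
        · rw [hσi _ h1, hσi _ (by omega)]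
        · rcases Nat.lt_or_ge t' i with h2 | h2
          · -- t' + 1 = i
            have hti : t' + 1 = i := by omega
            rw [hσg _ h1, hσi _ h2, hti, ← hj]
            exact hqij.symm
          · rw [hσg _ h1, hσg _ h2]
            congr 1; omega
      · have hem : t % m' + 1 = m' := by omega
        have hmod : (t+1) % m' = 0 := by rw [succ_mod', hem, Nat.mod_self]
        simp only [hs, hmod]
        have hσt : σ (t % m') = t % m' + p := hσg _ (by omega)
        have hval : σ (t % m') + 1 = m := by omega
        rw [hval]
        rcases Nat.lt_or_ge 0 i with h1 | h1
        · rw [hσi _ h1]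
          exact hqm.symm
        · have hi0 : i = 0 := by omega
          rw [hσg _ h1, show 0 + p = j from by omega, ← hqij, hi0]
          exact hqm.symm
    have hs_per : ∀ t, s (t + m') = s t := by
      intro t; simp only [hs, Nat.add_mod_right]
    have hs_e : ∀ t, E (s t) (s (t + 1)) := by
      intro t; rw [hs_succ]; exact hqe (σ (t % m'))
    have hs_ge : arcW w v 0 ℓ ≤ arcW w s 0 m' := IH m' hm'm s hm'1 hs_per hs_e
    have hs_val : arcW w s 0 m' = arcW w q 0 i + arcW w q j (m' - i) := by
      have hsplit : arcW w s 0 m' = arcW w s 0 i + arcW w s i (m' - i) := by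
        have h := arcW_add_s3 w s 0 i (m' - i)
        rw [show i + (m' - i) = m' from by omega, Nat.zero_add] at h
        exact h
      rw [hsplit]
      congr 1
      · unfold arcW
        apply Finset.sum_congr rfl
        intro t ht
        rw [Finset.mem_range] at ht
        have h1 : s (0 + t) = q t := by
          simp only [hs, Nat.zero_add, Nat.mod_eq_of_lt (by omega : t < m'), hσi _ ht]
        have h2 : s (0 + t + 1) = q (t + 1) := by
          rw [Nat.zero_add, hs_succ, Nat.mod_eq_of_lt (by omega : t < m'), hσi _ ht]
        rw [h1, h2, Nat.zero_add]
      · unfold arcW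
        apply Finset.sum_congr rfl
        intro t ht
        rw [Finset.mem_range] at ht
        have hlt : i + t < m' := by omega
        have h1 : s (i + t) = q (j + t) := by
          simp only [hs, Nat.mod_eq_of_lt hlt, hσg _ (by omega : i ≤ i + t)]
          congr 1; omega
        have h2 : s (i + t + 1) = q (j + t + 1) := by
          rw [hs_succ, Nat.mod_eq_of_lt hlt, hσg _ (by omega : i ≤ i + t)]
          congr 1; omega
        rw [h1, h2]
    -- assemble
    have htot : arcW w q 0 m = arcW w q 0 i + arcW w q i p + arcW w q j (m' - i) := by
      rw [show m = i + (p + (m' - i)) from by omega, arcW_add_s3, arcW_add_s3]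
      rw [Nat.zero_add, show i + p = j from hj.symm, add_assoc]
    have h1 := hr_ge
    have h2 := hs_ge
    rw [hr_val] at h1
    rw [hs_val] at h2
    rw [htot]
    linarith

def pathList {V : Type*} (c : ℕ → V) : ℕ → ℕ → List V
  | a, 0 => [c a]
  | a, k+1 => c a :: pathList c (a+1) k

lemma pathList_cons {V : Type*} (c : ℕ → V) (a k : ℕ) :
    ∃ tl, pathList c a k = c a :: tl := by
  cases k with
  | zero => exact ⟨[], rfl⟩
  | succ k => exact ⟨pathList c (a+1) k, rfl⟩

lemma pathList_isWalk {V : Type*} (E : V → V → Prop) (c : ℕ → V)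
    (hce : ∀ j, E (c j) (c (j+1))) : ∀ k a, IsWalk E (pathList c a k) := by
  intro k
  induction k with
  | zero => intro a; exact trivial
  | succ k ih =>
    intro a
    obtain ⟨tl, htl⟩ := pathList_cons c (a+1) k
    show IsWalk E (c a :: pathList c (a+1) k)
    rw [htl]
    exact ⟨hce a, htl ▸ ih (a+1)⟩

lemma pathList_head {V : Type*} (c : ℕ → V) (a k : ℕ) :
    (pathList c a k).head? = some (c a) := by
  obtain ⟨tl, htl⟩ := pathList_cons c a k
  rw [htl]; rfl

lemma pathList_last {V : Type*} (c : ℕ → V) : ∀ k a,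
    (pathList c a k).getLast? = some (c (a + k)) := by
  intro k
  induction k with
  | zero => intro a; rfl
  | succ k ih =>
    intro a
    obtain ⟨tl, htl⟩ := pathList_cons c (a+1) k
    show (c a :: pathList c (a+1) k).getLast? = _
    rw [htl, List.getLast?_cons_cons, ← htl, ih (a+1)]
    congr 2
    omega

lemma pathList_weight {V : Type*} (w : V → V → ℝ) (c : ℕ → V) : ∀ k a,
    wWeight w (pathList c a k) = arcW w c a k := by
  intro k
  induction k with
  | zero =>
    intro a
    show (0:ℝ) = arcW w c a 0
    unfold arcW
    simp
  | succ k ih =>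
    intro a
    obtain ⟨tl, htl⟩ := pathList_cons c (a+1) k
    show wWeight w (c a :: pathList c (a+1) k) = _
    rw [htl]
    show w (c a) (c (a+1)) + wWeight w (c (a+1) :: tl) = _
    rw [← htl, ih (a+1), arcW_succ_left]

lemma walk_getD_edge {V : Type*} (E : V → V → Prop) (dflt : V) :
    ∀ (p : List V), IsWalk E p → ∀ t, t + 1 < p.length →
      E (p.getD t dflt) (p.getD (t+1) dflt) := by
  intro p
  induction p with
  | nil => intro _ t ht; simp at ht
  | cons a l ih =>
    intro hw t ht
    cases l with
    | nil => simp at ht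
    | cons b l' =>
      obtain ⟨hab, hrest⟩ := hw
      cases t with
      | zero => simpa using hab
      | succ t =>
        have := ih hrest t (by simpa using ht)
        simpa using this

lemma wWeight_eq_sum {V : Type*} (w : V → V → ℝ) (dflt : V) :
    ∀ (p : List V), wWeight w p =
      ∑ t ∈ Finset.range (p.length - 1), w (p.getD t dflt) (p.getD (t+1) dflt) := by
  intro p
  induction p with
  | nil => simp [wWeight]
  | cons a l ih =>
    cases l with
    | nil => simp [wWeight]
    | cons b l' =>
      show w a b + wWeight w (b :: l') = _
      rw [ih]
      have hlen : (a :: b :: l').length - 1 = ((b :: l').length - 1) + 1 := by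
        simp
      rw [hlen, Finset.sum_range_succ']
      simp
      ring

lemma head?_getD {V : Type*} (dflt : V) (p : List V) (u : V) (h : p.head? = some u) :
    p.getD 0 dflt = u := by
  cases p with
  | nil => simp at h
  | cons a l => simp at h; simp [h]

lemma getLast?_getD {V : Type*} (dflt : V) :
    ∀ (p : List V) (x : V), p.getLast? = some x → p.getD (p.length - 1) dflt = x := by
  intro p
  induction p with
  | nil => intro x h; simp at h
  | cons a l ih =>
    intro x h
    cases l with
    | nil => simp at h; simp [h]
    | cons b l' =>
      rw [List.getLast?_cons_cons] at h
      have := ih x h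
      have hlen : (a :: b :: l').length - 1 = ((b :: l').length - 1) + 1 := by simp
      rw [hlen, List.getD_cons_succ]
      have h2 : (b :: l').length - 1 + 1 = (b :: l').length := by simp
      rw [← h2] at this ⊢
      exact this

/-- in a directed graph with real edge weights and no negative cycles
(here: the simple cycle `v` has nonnegative weight and is of minimum weight among all
simple directed cycles), for every two vertices `u = v a` and `x = v (a+k)` on the
minimum cycle `C`, the arc of `C` from `u` to `x` is a shortest path:
`d_C[u, x] = d[u, x]`, where `d` is the shortest-path distance (a lower bound on the
weight of every walk, attained by some walk whenever the endpoints are connected). -/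
theorem stmt3 {V : Type*} (E : V → V → Prop) (w : V → V → ℝ) (d : V → V → ℝ)
    (hdle : ∀ u x p, IsWalkFrom E p u x → d u x ≤ wWeight w p)
    (hdach : ∀ u x, (∃ p, IsWalkFrom E p u x) →
      ∃ p, IsWalkFrom E p u x ∧ wWeight w p = d u x)
    (ℓ : ℕ) (v : ℕ → V) (hℓ : 1 ≤ ℓ)
    (hper : ∀ j, v (j + ℓ) = v j)
    (hedge : ∀ j, E (v j) (v (j + 1)))
    (hinj : ∀ i j, i < ℓ → j < ℓ → v i = v j → i = j)
    (hwC : 0 ≤ arcW w v 0 ℓ)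
    (hmin : ∀ (m : ℕ) (u : ℕ → V), 1 ≤ m → (∀ j, u (j + m) = u j) →
      (∀ j, E (u j) (u (j + 1))) → (∀ i j, i < m → j < m → u i = u j → i = j) →
      arcW w v 0 ℓ ≤ arcW w u 0 m) :
    ∀ a k : ℕ, k < ℓ → arcW w v a k = d (v a) (v (a + k)) := by
  intro a k hk
  -- the arc itself is a walk from v a to v (a+k)
  have hWF : IsWalkFrom E (pathList v a k) (v a) (v (a + k)) :=
    ⟨pathList_isWalk E v hedge k a, pathList_head v a k, pathList_last v k a⟩
  have h1 : d (v a) (v (a + k)) ≤ arcW w v a k := by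
    have := hdle (v a) (v (a + k)) (pathList v a k) hWF
    rwa [pathList_weight w v k a] at this
  -- an optimal walk p
  obtain ⟨p, ⟨hpw, hph, hpl⟩, hwp⟩ := hdach (v a) (v (a + k)) ⟨pathList v a k, hWF⟩
  have hpne : p ≠ [] := by intro h; rw [h] at hph; simp at hph
  have hplen : 1 ≤ p.length := List.length_pos_iff.mpr hpne
  set n := p.length - 1 with hn
  set m := n + (ℓ - k) with hmdef
  have hm1 : 1 ≤ m := by omega
  have hg0 : p.getD 0 (v a) = v a := head?_getD (v a) p (v a) hph
  have hgn : p.getD n (v a) = v (a + k) := getLast?_getD (v a) p (v (a + k)) hpl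
  set f : ℕ → V := fun t => if t < n then p.getD t (v a) else v (a + k + (t - n)) with hf
  have hf_lt : ∀ t, t < n → f t = p.getD t (v a) := by intro t ht; simp [hf, ht]
  have hf_ge : ∀ t, n ≤ t → f t = v (a + k + (t - n)) := by
    intro t ht; simp [hf, Nat.not_lt.mpr ht]
  have hfn : f n = v (a + k) := by rw [hf_ge n le_rfl]; simp
  have hf_getD : ∀ t, t ≤ n → f t = p.getD t (v a) := by
    intro t ht
    rcases Nat.lt_or_ge t n with h | h
    · exact hf_lt t h
    · have : t = n := by omega
      rw [this, hfn, hgn]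
  have hf0 : f 0 = v a := by rw [hf_getD 0 (Nat.zero_le n), hg0]
  have hfm : f m = v a := by
    rw [hf_ge m (by omega), show a + k + (m - n) = a + ℓ from by omega, hper]
  have hfe : ∀ t, t < m → E (f t) (f (t + 1)) := by
    intro t ht
    rcases Nat.lt_or_ge t n with h | h
    · rw [hf_lt t h, hf_getD (t+1) (by omega)]
      exact walk_getD_edge E (v a) p hpw t (by omega)
    · rw [hf_ge t h, hf_ge (t+1) (by omega)]
      have h1 : t + 1 - n = (t - n) + 1 := by omega
      rw [h1, show a + k + (t - n + 1) = a + k + (t - n) + 1 from by omega]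
      exact hedge (a + k + (t - n))
  set q : ℕ → V := fun t => f (t % m) with hq
  have hq_per : ∀ t, q (t + m) = q t := by
    intro t; simp only [hq, Nat.add_mod_right]
  have hq_succ : ∀ t, q (t + 1) = f (t % m + 1) := by
    intro t
    have hlt : t % m < m := Nat.mod_lt t (by omega)
    rcases Nat.lt_or_ge (t % m + 1) m with h | h
    · have : (t+1) % m = t % m + 1 := by rw [succ_mod', Nat.mod_eq_of_lt h]
      simp only [hq, this]
    · have hem : t % m + 1 = m := by omega
      have : (t+1) % m = 0 := by rw [succ_mod', hem, Nat.mod_self]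
      simp only [hq, this]
      rw [hem, hfm]
      exact hf0
  have hq_e : ∀ t, E (q t) (q (t + 1)) := by
    intro t
    rw [hq_succ]
    exact hfe (t % m) (Nat.mod_lt t (by omega))
  have hmain := closedWalkGe E w ℓ v hwC hmin m q hm1 hq_per hq_e
  -- arcW q 0 m = arcW f 0 m
  have hqf : arcW w q 0 m = arcW w f 0 m := by
    unfold arcW
    apply Finset.sum_congr rfl
    intro t ht
    rw [Finset.mem_range] at ht
    have e1 : q (0 + t) = f (0 + t) := by
      simp only [hq, Nat.zero_add, Nat.mod_eq_of_lt ht]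
    have e2 : q (0 + t + 1) = f (0 + t + 1) := by
      rw [Nat.zero_add, hq_succ, Nat.mod_eq_of_lt ht]
    rw [e1, e2]
  have hsplit : arcW w f 0 m = arcW w f 0 n + arcW w f n (ℓ - k) := by
    have h := arcW_add_s3 w f 0 n (ℓ - k)
    rw [Nat.zero_add] at h
    exact h
  have hfw : arcW w f 0 n = wWeight w p := by
    rw [wWeight_eq_sum w (v a) p]
    unfold arcW
    apply Finset.sum_congr rfl
    intro t ht
    rw [Finset.mem_range] at ht
    have ht' : t < n := ht
    rw [Nat.zero_add, hf_lt t ht', hf_getD (t+1) (by omega)]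
  have hftail : arcW w f n (ℓ - k) = arcW w v (a + k) (ℓ - k) := by
    unfold arcW
    apply Finset.sum_congr rfl
    intro t ht
    rw [Finset.mem_range] at ht
    have e1 : f (n + t) = v (a + k + t) := by
      rw [hf_ge (n + t) (by omega)]; congr 1; omega
    have e2 : f (n + t + 1) = v (a + k + t + 1) := by
      rw [hf_ge (n + t + 1) (by omega)]; congr 1; omega
    rw [e1, e2]
  -- the cycle splits
  have hcyc : arcW w v 0 ℓ = arcW w v a k + arcW w v (a + k) (ℓ - k) := by
    have h := arcW_add_s3 w v a k (ℓ - k)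
    rw [show k + (ℓ - k) = ℓ from by omega] at h
    rw [← arcW_period_s3 w v ℓ hper a, h]
  rw [hqf, hsplit, hfw, hwp, hcyc] at hmain
  linarith
end
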